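/- Let α be a partial transformation of {1, ..., n} with domain {i1 < i2 < ... < ik}, k ≥ 3, and let ᾱ be the full transformation defined by i ᾱ = i1 α for 1 ≤ i ≤ i2 - 1, i ᾱ = i_ℓ α for i_ℓ ≤ i < i_{ℓ+1} (ℓ = 2, ..., k-1), and i ᾱ = i_k α for i_k ≤ i ≤ n. Then α is oriented if and only if ᾱ is oriented. -/

import Mathlib

/-- A sequence `a : Fin t → Fin n` is cyclic if at most one index `i`
satisfies `a i > a (i+1)` (indices mod `t`). -/
def IsCyclicSeq {n t : ℕ} (a : Fin t → Fin n) : Prop :=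
  (Finset.univ.filter fun i : Fin t =>
    a ⟨(i.val + 1) % t, Nat.mod_lt _ i.pos⟩ < a i).card ≤ 1

/-- A sequence is anti-cyclic if at most one index `i`
satisfies `a i < a (i+1)` (indices mod `t`). -/
def IsAntiCyclicSeq {n t : ℕ} (a : Fin t → Fin n) : Prop :=
  (Finset.univ.filter fun i : Fin t =>
    a i < a ⟨(i.val + 1) % t, Nat.mod_lt _ i.pos⟩).card ≤ 1

/-- A sequence is oriented if it is cyclic or anti-cyclic. -/
def IsOrientedSeq {n t : ℕ} (a : Fin t → Fin n) : Prop :=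
  IsCyclicSeq a ∨ IsAntiCyclicSeq a

/-!
The sequence of values of `ᾱ` is that of `α` with each entry repeated: `ᾱ = f ∘ s` for the
monotone surjection `s` sending `i` to the index of the block containing it. Under such a
reparametrisation a cyclic descent (or ascent) of `ᾱ` can only occur at the last position of a
block, and it does so exactly when the value of that block descends (ascends) into the next one.
Hence `ᾱ` and `α` have the same numbers of cyclic descents and of cyclic ascents.
-/

open Finset Function

section Order

variable {α β : Type*} [LinearOrder α] [PartialOrder β] {s : α → β}

theorem Monotone.wcovBy_of_surjective (hs : Monotone s) (hsurj : Surjective s) {a b : α}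
    (hab : a ⩿ b) : s a ⩿ s b := by
  refine ⟨hs hab.le, fun c hac hcb => ?_⟩
  obtain ⟨p, rfl⟩ := hsurj c
  rcases le_or_gt p a with hpa | hap
  · exact (hs hpa).not_gt hac
  · exact (hs (hab.ge_of_gt hap)).not_gt hcb

theorem Monotone.isBot_apply (hs : Monotone s) (hsurj : Surjective s) {a : α} (ha : IsBot a) :
    IsBot (s a) :=
  hsurj.forall.2 fun p => hs (ha p)

theorem Monotone.isTop_apply (hs : Monotone s) (hsurj : Surjective s) {a : α} (ha : IsTop a) :
    IsTop (s a) :=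
  hsurj.forall.2 fun p => hs (ha p)

end Order

section FinRotate

variable {t : ℕ}

lemma val_finRotate (i : Fin t) : (finRotate t i : ℕ) = (i + 1) % t := by
  rcases t with _ | t
  · exact i.elim0
  · simp [Fin.val_add]

lemma finRotate_eq_mk (i : Fin t) : finRotate t i = ⟨(i + 1) % t, Nat.mod_lt _ i.pos⟩ :=
  Fin.ext (val_finRotate i)

lemma covBy_finRotate {i : Fin t} (hi : i.val + 1 < t) : i ⋖ finRotate t i := by
  rw [Fin.covBy_iff, Nat.covBy_iff_add_one_eq, val_finRotate, Nat.mod_eq_of_lt hi]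

lemma finRotate_of_covBy {a b : Fin t} (h : a ⋖ b) : finRotate t a = b := by
  rw [Fin.covBy_iff, Nat.covBy_iff_add_one_eq] at h
  ext
  rw [val_finRotate, ← h, Nat.mod_eq_of_lt (h ▸ b.isLt)]

end FinRotate

section CyclicDescents

variable {α : Type*} (r : α → α → Prop) [DecidableRel r] {t : ℕ}

def cyclicDescents (a : Fin t → α) : Finset (Fin t) :=
  {i | r (a (finRotate t i)) (a i)}

variable {r} in
@[simp]
lemma mem_cyclicDescents {a : Fin t → α} {i : Fin t} :
    i ∈ cyclicDescents r a ↔ r (a (finRotate t i)) (a i) := by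
  simp [cyclicDescents]

lemma isCyclicSeq_iff {n : ℕ} (a : Fin t → Fin n) :
    IsCyclicSeq a ↔ #(cyclicDescents (· < ·) a) ≤ 1 := by
  simp only [IsCyclicSeq, cyclicDescents, finRotate_eq_mk]

lemma isAntiCyclicSeq_iff {n : ℕ} (a : Fin t → Fin n) :
    IsAntiCyclicSeq a ↔ #(cyclicDescents (· > ·) a) ≤ 1 := by
  simp only [IsAntiCyclicSeq, cyclicDescents, finRotate_eq_mk, gt_iff_lt]

end CyclicDescents

section MonotoneSurjection

variable {n k : ℕ} {s : Fin n → Fin k} (hs : Monotone s) (hsurj : Surjective s)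
include hs hsurj

lemma apply_finRotate_of_val_add_one_eq {i : Fin n} (hi : i.val + 1 = n) :
    s (finRotate n i) = finRotate k (s i) := by
  have hbot : IsBot (finRotate n i) := fun _ =>
    Fin.le_def.2 (by rw [val_finRotate, hi, Nat.mod_self]; omega)
  have htop : IsTop i := fun _ => Fin.le_def.2 (by omega)
  have h0 := Fin.le_def.1 <| hs.isBot_apply hsurj hbot ⟨0, (s i).pos⟩
  have hlast := Fin.le_def.1 <| hs.isTop_apply hsurj htop ⟨k - 1, by have := (s i).pos; omega⟩
  have hk : (s i : ℕ) + 1 = k := by have := (s i).isLt; simp only at hlast; omega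
  ext
  rw [val_finRotate, hk, Nat.mod_self]
  simpa using h0

lemma apply_finRotate_of_ne {i : Fin n} (h : s (finRotate n i) ≠ s i) :
    s (finRotate n i) = finRotate k (s i) := by
  by_cases hi : i.val + 1 = n
  · exact apply_finRotate_of_val_add_one_eq hs hsurj hi
  have hcov : s i ⋖ s (finRotate n i) :=
    (hs.wcovBy_of_surjective hsurj (covBy_finRotate (by omega)).wcovBy).covBy_of_ne h.symm
  exact (finRotate_of_covBy hcov).symm

lemma card_cyclicDescents_comp {α : Type*} (r : α → α → Prop) [DecidableRel r]
    (hr : ∀ a, ¬ r a a) (f : Fin k → α) :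
    #(cyclicDescents r (f ∘ s)) = #(cyclicDescents r f) := by
  have hne : ∀ {i}, i ∈ cyclicDescents r (f ∘ s) → s (finRotate n i) ≠ s i :=
    fun hi heq => hr _ (by simpa only [mem_cyclicDescents, comp_apply, heq] using hi)
  have apply_lt : ∀ {i j}, i ∈ cyclicDescents r (f ∘ s) → i < j → s i < s j := by
    intro i j hi hij
    have hcov := covBy_finRotate (i := i) (by omega)
    exact ((hs hcov.le).lt_of_ne (hne hi).symm).trans_le (hs (hcov.ge_of_gt hij))
  refine card_bij (fun i _ => s i) (fun i hi => ?_) (fun i hi j hj hij => ?_) (fun ℓ hℓ => ?_)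
  · simpa only [mem_cyclicDescents, comp_apply, apply_finRotate_of_ne hs hsurj (hne hi)] using hi
  · by_contra hij'
    rcases lt_or_gt_of_ne hij' with hlt | hlt
    · exact (apply_lt hi hlt).ne hij
    · exact (apply_lt hj hlt).ne hij.symm
  · have hℓ' : finRotate k ℓ ≠ ℓ := fun heq =>
      hr _ (by simpa only [mem_cyclicDescents, heq] using hℓ)
    -- the last index of the block of `ℓ` is a descent
    have hP : ({i | s i = ℓ} : Finset (Fin n)).Nonempty :=
      (hsurj ℓ).imp fun _ hi => by simpa using hi
    set i := ({i | s i = ℓ} : Finset (Fin n)).max' hP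
    have hsi : s i = ℓ := by simpa using max'_mem _ hP
    have hexit : s (finRotate n i) ≠ s i := by
      by_cases hi : i.val + 1 = n
      · rwa [apply_finRotate_of_val_add_one_eq hs hsurj hi, hsi]
      · intro heq
        exact (covBy_finRotate (i := i) (by omega)).lt.not_ge
          (le_max' _ _ (by simpa only [mem_filter, mem_univ, true_and, hsi] using heq))
    refine ⟨i, ?_, hsi⟩
    simpa only [mem_cyclicDescents, comp_apply, apply_finRotate_of_ne hs hsurj hexit, hsi]
      using hℓ

lemma isOrientedSeq_comp_iff {m : ℕ} (f : Fin k → Fin m) :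
    IsOrientedSeq (f ∘ s) ↔ IsOrientedSeq f := by
  rw [IsOrientedSeq, IsOrientedSeq, isCyclicSeq_iff, isCyclicSeq_iff, isAntiCyclicSeq_iff,
    isAntiCyclicSeq_iff, card_cyclicDescents_comp hs hsurj (· < ·) lt_irrefl,
    card_cyclicDescents_comp hs hsurj (· > ·) lt_irrefl]

end MonotoneSurjection

section BlockIndex

variable {n k : ℕ} [NeZero k] (e : Fin k → Fin n)

/-- The index `ℓ` of the block `[e ℓ, e (ℓ + 1))` containing `i`, the first block being
extended down to `0`. -/
def blockIndex (i : Fin n) : Fin k :=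
  (insert 0 ({ℓ | e ℓ ≤ i} : Finset (Fin k))).max' (insert_nonempty _ _)

lemma monotone_blockIndex : Monotone (blockIndex e) := fun _ _ hij =>
  max'_subset _ <| insert_subset_insert _ <| monotone_filter_right _ fun _ _ h => h.trans hij

lemma le_blockIndex {i : Fin n} {m : Fin k} (hm : e m ≤ i) : m ≤ blockIndex e i :=
  le_max' _ _ (by simp [hm])

lemma blockIndex_eq_zero_or_le (i : Fin n) : blockIndex e i = 0 ∨ e (blockIndex e i) ≤ i := by
  simpa [blockIndex] using
    max'_mem (insert 0 ({ℓ | e ℓ ≤ i} : Finset (Fin k))) (insert_nonempty _ _)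

variable {e}

lemma blockIndex_apply (he : StrictMono e) (ℓ : Fin k) : blockIndex e (e ℓ) = ℓ :=
  le_antisymm (max'_le _ _ _ (by simp [he.le_iff_le])) (le_blockIndex e le_rfl)

lemma surjective_blockIndex (he : StrictMono e) : Surjective (blockIndex e) :=
  fun ℓ => ⟨e ℓ, blockIndex_apply he ℓ⟩

end BlockIndex

/-- The partial transformation `α` is encoded by the increasing enumeration `e` of its domain and
its images `f ℓ = (e ℓ) α`. -/
theorem por_iff_bar_oriented {n k : ℕ} (hk : 3 ≤ k)
    (e : Fin k → Fin n) (he : StrictMono e) (f : Fin k → Fin n)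
    (abar : Fin n → Fin n)
    (hlow : ∀ i : Fin n, i < e ⟨1, by omega⟩ → abar i = f ⟨0, by omega⟩)
    (hstep : ∀ (i : Fin n) (ℓ : Fin k), e ℓ ≤ i →
      (∀ m : Fin k, e m ≤ i → m ≤ ℓ) → abar i = f ℓ) :
    IsOrientedSeq f ↔ IsOrientedSeq abar := by
  have : NeZero k := ⟨by omega⟩
  have habar : abar = f ∘ blockIndex e := by
    funext i
    by_cases hi : e (blockIndex e i) ≤ i
    · exact hstep i _ hi fun m hm => le_blockIndex e hm
    · have h0 : blockIndex e i = 0 := (blockIndex_eq_zero_or_le e i).resolve_right hi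
      rw [h0] at hi
      exact (hlow i ((not_le.1 hi).trans (he (by simp [Fin.lt_def])))).trans
        (by simp [h0])
  rw [habar, isOrientedSeq_comp_iff (monotone_blockIndex e) (surjective_blockIndex he)]
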